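/- arXiv:1604.05494 — 4 statements merged into one kernel-verified Lean document; each statement's English description precedes it below -/
import Mathlib

section
/- Let f(z) = z + ∑_{n≥2} aₙ zⁿ satisfy ∑_{n≥2} n|aₙ| ≤ 1 (the Hurwitz class H). Then for every λ > 0 and n ≥ 2, |λ aₙ² − a_{2n−1}| ≤ max{λ/n², 1/(2n−1)}. -/
/-! Only two coefficients matter: the Hurwitz condition gives `n‖aₙ‖ + (2n-1)‖a_{2n-1}‖ ≤ 1`, and
with `M` the right-hand side, `λ‖aₙ‖² ≤ M (n‖aₙ‖)² ≤ M n‖aₙ‖` and `‖a_{2n-1}‖ ≤ M (2n-1)‖a_{2n-1}‖`,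
so the triangle inequality bounds `‖λaₙ² - a_{2n-1}‖` by `M (n‖aₙ‖ + (2n-1)‖a_{2n-1}‖) ≤ M`. -/

lemma mul_sq_add_le_max_of_mul_add_mul_le_one {lam p q x y : ℝ} (hp : 0 < p) (hq : 0 < q)
    (hx : 0 ≤ x) (hy : 0 ≤ y) (hxy : p * x + q * y ≤ 1) :
    lam * x ^ 2 + y ≤ max (lam / p ^ 2) (1 / q) := by
  set M := max (lam / p ^ 2) (1 / q)
  have hpM : lam ≤ M * p ^ 2 := (div_le_iff₀ (by positivity)).mp (le_max_left _ _)
  have hqM : 1 ≤ M * q := (div_le_iff₀ hq).mp (le_max_right _ _)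
  have hM : 0 ≤ M := (one_div_pos.mpr hq).le.trans (le_max_right _ _)
  have hpx : p * x ≤ 1 := by nlinarith
  calc lam * x ^ 2 + y ≤ M * (p * x) ^ 2 + M * (q * y) := by
        gcongr ?_ + ?_
        · nlinarith [sq_nonneg x]
        · nlinarith
    _ ≤ M * (p * x) + M * (q * y) := by
        gcongr
        nlinarith [mul_nonneg hp.le hx]
    _ ≤ M := by nlinarith

lemma mul_norm_add_mul_norm_le_one_of_tsum_le_one {E : Type*} [SeminormedAddGroup E]
    {a : ℕ → E}
    (hsum : Summable (fun n : ℕ => ((n : ℝ) + 2) * ‖a (n + 2)‖))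
    (h : ∑' n : ℕ, ((n : ℝ) + 2) * ‖a (n + 2)‖ ≤ 1)
    {i j : ℕ} (hi : 2 ≤ i) (hj : 2 ≤ j) (hij : i ≠ j) :
    (i : ℝ) * ‖a i‖ + j * ‖a j‖ ≤ 1 := by
  obtain ⟨i, rfl⟩ := Nat.exists_eq_add_of_le' hi
  obtain ⟨j, rfl⟩ := Nat.exists_eq_add_of_le' hj
  have hpair := (hsum.sum_le_tsum {i, j} (fun k _ => by positivity)).trans h
  rw [Finset.sum_pair (by omega)] at hpair
  exact_mod_cast hpair

theorem stmt_3 (a : ℕ → ℂ)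
    (hsum : Summable (fun n : ℕ => ((n : ℝ) + 2) * ‖a (n + 2)‖))
    (h : ∑' n : ℕ, ((n : ℝ) + 2) * ‖a (n + 2)‖ ≤ 1)
    (lam : ℝ) (hlam : 0 < lam) (n : ℕ) (hn : 2 ≤ n) :
    ‖(lam : ℂ) * (a n) ^ 2 - a (2 * n - 1)‖ ≤
      max (lam / (n : ℝ) ^ 2) (1 / (2 * (n : ℝ) - 1)) := by
  have hcast : ((2 * n - 1 : ℕ) : ℝ) = 2 * n - 1 := by
    rw [Nat.cast_sub (by omega)]
    push_cast
    ring
  have hpair : (n : ℝ) * ‖a n‖ + (2 * n - 1) * ‖a (2 * n - 1)‖ ≤ 1 := by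
    simpa only [hcast] using
      mul_norm_add_mul_norm_le_one_of_tsum_le_one hsum h hn (by omega : 2 ≤ 2 * n - 1) (by omega)
  have htriangle :
      ‖(lam : ℂ) * (a n) ^ 2 - a (2 * n - 1)‖ ≤ lam * ‖a n‖ ^ 2 + ‖a (2 * n - 1)‖ := by
    refine (norm_sub_le _ _).trans_eq ?_
    rw [norm_mul, norm_pow, Complex.norm_real, Real.norm_of_nonneg hlam.le]
  have hn' : (2 : ℝ) ≤ n := by exact_mod_cast hn
  exact htriangle.trans <| mul_sq_add_le_max_of_mul_add_mul_le_one (by linarith) (by linarith)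
    (norm_nonneg _) (norm_nonneg _) hpair
end

section
/- Fix β ∈ [0,1). Let μ be a probability measure on [0,2π] and set aₙ = (2(1−β)/n) ∫₀^{2π} e^{i(n−1)θ} dμ(θ) for n ≥ 2. Then for all n, m ≥ 2 and all real λ ≥ nm/((1−β)(n+m−1)): |λ aₙ aₘ − a_{n+m−1}| ≤ 4λ(1−β)²/(nm) − 2(1−β)/(n+m−1). -/
/-!
Write `φ` for the characteristic function of the push-forward of `μ` to `ℝ`, so that
`aₖ = 2(1-β)/k · φ(k-1)` and `a_{n+m-1}` involves `φ((n-1)+(m-1))`. Cauchy–Schwarz applied to the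
centred unimodular functions `e^{isθ} - φ(s)`, `e^{itθ} - φ(t)` gives
`|φ(s+t) - φ(s)φ(t)| ≤ √(1-|φ s|²)·√(1-|φ t|²) ≤ 1 - |φ s||φ t|`.
With `A = 4λ(1-β)²/(nm)` and `B = 2(1-β)/(n+m-1)` the hypothesis on `λ` says `2B ≤ A`, and
`λ aₙ aₘ - a_{n+m-1} = (A - B) φ(s)φ(t) - B (φ(s+t) - φ(s)φ(t))` has norm at most
`(A - B) xy + B (1 - xy) ≤ A - B`, where `x = |φ s|`, `y = |φ t|`.
-/

open MeasureTheory

section Covariance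

variable {Ω : Type*} [MeasurableSpace Ω] {μ : Measure Ω}

lemma norm_integral_mul_le_sqrt_mul_sqrt {𝕜 : Type*} [RCLike 𝕜] {f g : Ω → 𝕜}
    (hf : MemLp f 2 μ) (hg : MemLp g 2 μ) :
    ‖∫ x, f x * g x ∂μ‖ ≤ √(∫ x, ‖f x‖ ^ 2 ∂μ) * √(∫ x, ‖g x‖ ^ 2 ∂μ) := by
  have h2 : ENNReal.ofReal 2 = 2 := by norm_num
  calc ‖∫ x, f x * g x ∂μ‖ ≤ ∫ x, ‖f x‖ * ‖g x‖ ∂μ := by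
        simpa only [norm_mul] using norm_integral_le_integral_norm (fun x ↦ f x * g x)
    _ ≤ (∫ x, ‖f x‖ ^ (2 : ℝ) ∂μ) ^ (1 / (2 : ℝ)) * (∫ x, ‖g x‖ ^ (2 : ℝ) ∂μ) ^ (1 / (2 : ℝ)) :=
        integral_mul_norm_le_Lp_mul_Lq .two_two (h2 ▸ hf) (h2 ▸ hg)
    _ = √(∫ x, ‖f x‖ ^ 2 ∂μ) * √(∫ x, ‖g x‖ ^ 2 ∂μ) := by
        simp only [Real.rpow_two, Real.sqrt_eq_rpow]

variable [IsProbabilityMeasure μ]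

lemma integral_norm_sub_integral_sq {E : Type*} [NormedAddCommGroup E] [InnerProductSpace ℝ E]
    [CompleteSpace E] {f : Ω → E} (hf : MemLp f 2 μ) :
    ∫ x, ‖f x - ∫ y, f y ∂μ‖ ^ 2 ∂μ = ∫ x, ‖f x‖ ^ 2 ∂μ - ‖∫ y, f y ∂μ‖ ^ 2 := by
  set c := ∫ y, f y ∂μ
  have hf1 : Integrable f μ := hf.integrable one_le_two
  have hf2 : Integrable (fun x ↦ ‖f x‖ ^ 2) μ := hf.integrable_norm_pow two_ne_zero
  have hinner : Integrable (fun x ↦ 2 * inner ℝ c (f x)) μ := (hf1.const_inner c).const_mul 2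
  have hsub : Integrable (fun x ↦ ‖f x‖ ^ 2 - 2 * inner ℝ c (f x)) μ := hf2.sub hinner
  have hpt : ∀ x, ‖f x - c‖ ^ 2 = ‖f x‖ ^ 2 - 2 * inner ℝ c (f x) + ‖c‖ ^ 2 := fun x ↦ by
    rw [norm_sub_sq_real, real_inner_comm]
  simp_rw [hpt]
  rw [integral_add hsub (integrable_const _), integral_sub hf2 hinner, integral_const_mul,
    integral_inner hf1, real_inner_self_eq_norm_sq, integral_const]
  simp only [probReal_univ, one_smul]
  ring

lemma integral_sub_integral_mul_sub_integral {𝕜 : Type*} [RCLike 𝕜] {f g : Ω → 𝕜}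
    (hf : Integrable f μ) (hg : Integrable g μ) (hfg : Integrable (fun x ↦ f x * g x) μ) :
    ∫ x, (f x - ∫ y, f y ∂μ) * (g x - ∫ y, g y ∂μ) ∂μ
      = ∫ x, f x * g x ∂μ - (∫ y, f y ∂μ) * ∫ y, g y ∂μ := by
  set c := ∫ y, f y ∂μ
  set d := ∫ y, g y ∂μ
  have hpt : ∀ x, (f x - c) * (g x - d) = f x * g x - (f x * d + c * g x - c * d) :=
    fun x ↦ by ring
  simp_rw [hpt]
  have hlin : Integrable (fun x ↦ f x * d + c * g x) μ := (hf.mul_const d).add (hg.const_mul c)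
  have hlin' : Integrable (fun x ↦ f x * d + c * g x - c * d) μ := hlin.sub (integrable_const _)
  rw [integral_sub hfg hlin', integral_sub hlin (integrable_const _),
    integral_add (hf.mul_const d) (hg.const_mul c), integral_mul_const, integral_const_mul,
    integral_const]
  simp only [probReal_univ, one_smul]
  ring

lemma norm_integral_mul_sub_integral_mul_integral_le {f g : Ω → ℂ}
    (hf : MemLp f 2 μ) (hg : MemLp g 2 μ) :
    ‖∫ x, f x * g x ∂μ - (∫ x, f x ∂μ) * ∫ x, g x ∂μ‖
      ≤ √(∫ x, ‖f x‖ ^ 2 ∂μ - ‖∫ x, f x ∂μ‖ ^ 2) * √(∫ x, ‖g x‖ ^ 2 ∂μ - ‖∫ x, g x ∂μ‖ ^ 2) := by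
  rw [← integral_sub_integral_mul_sub_integral (hf.integrable one_le_two)
      (hg.integrable one_le_two) (hf.integrable_mul hg),
    ← integral_norm_sub_integral_sq hf, ← integral_norm_sub_integral_sq hg]
  exact norm_integral_mul_le_sqrt_mul_sqrt (hf.sub (memLp_const _)) (hg.sub (memLp_const _))

end Covariance

section CharFun

variable {E : Type*} [NormedAddCommGroup E] [InnerProductSpace ℝ E] [MeasurableSpace E]
  [OpensMeasurableSpace E] {μ : Measure E} [IsProbabilityMeasure μ]

lemma memLp_exp_inner_mul_I (t : E) (p : ENNReal) :
    MemLp (fun x ↦ Complex.exp (inner ℝ x t * Complex.I)) p μ :=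
  (memLp_top_of_bound (by fun_prop) 1 (.of_forall fun x ↦
    (Complex.norm_exp_ofReal_mul_I _).le)).mono_exponent le_top

lemma norm_charFun_add_sub_mul_le (s t : E) :
    ‖charFun μ (s + t) - charFun μ s * charFun μ t‖
      ≤ √(1 - ‖charFun μ s‖ ^ 2) * √(1 - ‖charFun μ t‖ ^ 2) := by
  have h := norm_integral_mul_sub_integral_mul_integral_le (μ := μ)
    (memLp_exp_inner_mul_I s 2) (memLp_exp_inner_mul_I t 2)
  simpa only [Complex.norm_exp_ofReal_mul_I, one_pow, integral_const, probReal_univ, one_smul,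
    ← Complex.exp_add, ← add_mul, ← Complex.ofReal_add, ← inner_add_right, ← charFun_apply] using h

end CharFun

lemma sqrt_one_sub_sq_mul_sqrt_one_sub_sq_le {x y : ℝ} (hx : x ^ 2 ≤ 1) (hy : y ^ 2 ≤ 1) :
    √(1 - x ^ 2) * √(1 - y ^ 2) ≤ 1 - x * y := by
  have hxy : x * y ≤ 1 := by nlinarith [sq_nonneg (x - y)]
  rw [← Real.sqrt_mul (by linarith), ← Real.sqrt_sq (by linarith : 0 ≤ 1 - x * y)]
  exact Real.sqrt_le_sqrt (by nlinarith [sq_nonneg (x - y)])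

lemma norm_mul_mul_sub_mul_le {A B : ℝ} {z w u : ℂ} (hz : ‖z‖ ≤ 1) (hw : ‖w‖ ≤ 1)
    (hu : ‖u - z * w‖ ≤ √(1 - ‖z‖ ^ 2) * √(1 - ‖w‖ ^ 2)) (hB : 0 ≤ B) (hAB : 2 * B ≤ A) :
    ‖A * (z * w) - B * u‖ ≤ A - B := by
  have hzw := sqrt_one_sub_sq_mul_sqrt_one_sub_sq_le (pow_le_one₀ (norm_nonneg z) hz)
    (pow_le_one₀ (norm_nonneg w) hw)
  have hzw1 : ‖z‖ * ‖w‖ ≤ 1 := mul_le_one₀ hz (norm_nonneg w) hw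
  calc ‖A * (z * w) - B * u‖ = ‖((A - B : ℝ) : ℂ) * (z * w) - B * (u - z * w)‖ := by
        congr 1; push_cast; ring
    _ ≤ (A - B) * (‖z‖ * ‖w‖) + B * ‖u - z * w‖ := by
        refine (norm_sub_le _ _).trans_eq ?_
        rw [norm_mul, norm_mul, norm_mul, Complex.norm_real, Complex.norm_real,
          Real.norm_of_nonneg (by linarith), Real.norm_of_nonneg hB]
    _ ≤ (A - B) * (‖z‖ * ‖w‖) + B * (1 - ‖z‖ * ‖w‖) := by gcongr; exact hu.trans hzw
    _ ≤ A - B := by nlinarith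

lemma integral_exp_eq_charFun_map {α : Type*} [MeasurableSpace α] {μ : Measure α} {θ : α → ℝ}
    (hθ : Measurable θ) (s : ℝ) :
    ∫ x, Complex.exp (Complex.I * s * θ x) ∂μ = charFun (μ.map θ) s := by
  rw [charFun_apply_real, integral_map hθ.aemeasurable (by fun_prop)]
  congr 1 with x
  ring_nf

theorem stmt_8_general (β : ℝ) (hβ1 : β < 1)
    (μ : Measure (Set.Icc (0 : ℝ) (2 * Real.pi))) [IsProbabilityMeasure μ]
    (a : ℕ → ℂ)
    (ha : ∀ k, 2 ≤ k →
      a k = ((2 * (1 - β) / k : ℝ) : ℂ) *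
        ∫ θ, Complex.exp (Complex.I * ((k : ℂ) - 1) * (θ : ℝ)) ∂μ)
    (n m : ℕ) (hn : 2 ≤ n) (hm : 2 ≤ m) (lam : ℝ)
    (hlam : (n : ℝ) * m / ((1 - β) * ((n : ℝ) + m - 1)) ≤ lam) :
    ‖(lam : ℂ) * a n * a m - a (n + m - 1)‖ ≤
      4 * lam * (1 - β) ^ 2 / ((n : ℝ) * m) - 2 * (1 - β) / ((n : ℝ) + m - 1) := by
  set ν := μ.map Subtype.val
  have : IsProbabilityMeasure ν :=
    Measure.isProbabilityMeasure_map measurable_subtype_coe.aemeasurable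
  have ha' : ∀ k, 2 ≤ k → a k = ((2 * (1 - β) / k : ℝ) : ℂ) * charFun ν ((k : ℝ) - 1) := by
    intro k hk
    rw [ha k hk, ← integral_exp_eq_charFun_map measurable_subtype_coe]
    push_cast
    rfl
  have hβ : 0 < 1 - β := by linarith
  have hN : (2 : ℝ) ≤ n := by exact_mod_cast hn
  have hM : (2 : ℝ) ≤ m := by exact_mod_cast hm
  have hS : (0 : ℝ) < n + m - 1 := by linarith
  have hcast : ((n + m - 1 : ℕ) : ℝ) = (n : ℝ) + m - 1 := by
    rw [Nat.cast_sub (by omega)]; push_cast; ring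
  have hAB : 2 * (2 * (1 - β) / ((n : ℝ) + m - 1)) ≤ 4 * lam * (1 - β) ^ 2 / ((n : ℝ) * m) :=
    calc 2 * (2 * (1 - β) / ((n : ℝ) + m - 1))
        = 4 * (1 - β) ^ 2 / ((n : ℝ) * m) * ((n : ℝ) * m / ((1 - β) * ((n : ℝ) + m - 1))) := by
          field_simp; norm_num
      _ ≤ 4 * (1 - β) ^ 2 / ((n : ℝ) * m) * lam := by gcongr
      _ = 4 * lam * (1 - β) ^ 2 / ((n : ℝ) * m) := by ring
  rw [ha' n hn, ha' m hm, ha' _ (by omega), hcast,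
    show (n : ℝ) + m - 1 - 1 = ((n : ℝ) - 1) + ((m : ℝ) - 1) by ring]
  have key := norm_mul_mul_sub_mul_le (norm_charFun_le_one _) (norm_charFun_le_one _)
    (norm_charFun_add_sub_mul_le (μ := ν) ((n : ℝ) - 1) ((m : ℝ) - 1)) (by positivity) hAB
  convert key using 2
  push_cast
  ring

theorem stmt_8 (β : ℝ) (hβ0 : 0 ≤ β) (hβ1 : β < 1)
    (μ : Measure (Set.Icc (0 : ℝ) (2 * Real.pi))) [IsProbabilityMeasure μ]
    (a : ℕ → ℂ)
    (ha : ∀ k, 2 ≤ k →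
      a k = ((2 * (1 - β) / k : ℝ) : ℂ) *
        ∫ θ, Complex.exp (Complex.I * ((k : ℂ) - 1) * (θ : ℝ)) ∂μ)
    (n m : ℕ) (hn : 2 ≤ n) (hm : 2 ≤ m) (lam : ℝ)
    (hlam : (n : ℝ) * m / ((1 - β) * ((n : ℝ) + m - 1)) ≤ lam) :
    ‖(lam : ℂ) * a n * a m - a (n + m - 1)‖ ≤
      4 * lam * (1 - β) ^ 2 / ((n : ℝ) * m) - 2 * (1 - β) / ((n : ℝ) + m - 1) :=
  stmt_8_general β hβ1 μ a ha n m hn hm lam hlam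
end

section
/- Fix β ∈ [0,1). Let f(z) = z + ∑_{n≥2} aₙ zⁿ satisfy ∑_{n≥2} ((n−β)/(1−β))|aₙ| ≤ 1. Then for every λ > 0 and n ≥ 2, |λ aₙ² − a_{2n−1}| ≤ max{λ(1−β)²/(n−β)², (1−β)/(2n−1−β)}. -/
/-!
Only the coefficients `aₙ` and `a₂ₙ₋₁` enter. Their two terms in the coefficient sum give
`x + y ≤ 1` with `x = (n-β)/(1-β) |aₙ|`, `y = (2n-1-β)/(1-β) |a₂ₙ₋₁|`, and then
`λ|aₙ|² + |a₂ₙ₋₁| = p x² + q y ≤ p x + q y ≤ max p q` because `x ≤ 1`.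
-/

lemma mul_sq_add_mul_le_max {p q x y : ℝ} (hp : 0 ≤ p) (hx : 0 ≤ x) (hy : 0 ≤ y)
    (hxy : x + y ≤ 1) : p * x ^ 2 + q * y ≤ max p q := by
  have hx2 : x ^ 2 ≤ x := by nlinarith
  calc p * x ^ 2 + q * y ≤ max p q * x + max p q * y := by
        gcongr
        · exact le_max_left p q
        · exact le_max_right p q
    _ = max p q * (x + y) := by ring
    _ ≤ max p q := mul_le_of_le_one_right (hp.trans (le_max_left p q)) hxy

lemma mul_sq_add_le_max_of_weighted {lam A B c d : ℝ} (hlam : 0 ≤ lam) (hA : 0 ≤ A)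
    (hB : 0 ≤ B) (hc : 0 < c) (hd : 0 < d) (h : c * A + d * B ≤ 1) :
    lam * A ^ 2 + B ≤ max (lam / c ^ 2) (1 / d) := by
  have key : lam * A ^ 2 + B = lam / c ^ 2 * (c * A) ^ 2 + 1 / d * (d * B) := by
    field_simp
  rw [key]
  exact mul_sq_add_mul_le_max (by positivity) (by positivity) (by positivity) h

lemma Summable.add_le_tsum_of_ne {f : ℕ → ℝ} (hf : Summable f) (hf0 : ∀ k, 0 ≤ f k) {i j : ℕ}
    (hij : i ≠ j) : f i + f j ≤ ∑' k, f k := by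
  rw [← Finset.sum_pair hij]
  exact hf.sum_le_tsum _ fun k _ ↦ hf0 k

theorem stmt_14_general (β : ℝ) (hβ1 : β < 1) (a : ℕ → ℂ)
    (hsum : Summable (fun n : ℕ =>
      (((n : ℝ) + 2 - β) / (1 - β)) * ‖a (n + 2)‖))
    (h : ∑' n : ℕ, (((n : ℝ) + 2 - β) / (1 - β)) * ‖a (n + 2)‖ ≤ 1)
    (lam : ℝ) (hlam : 0 < lam) (n : ℕ) (hn : 2 ≤ n) :
    ‖lam * (a n) ^ 2 - a (2 * n - 1)‖ ≤
      max (lam * (1 - β) ^ 2 / ((n : ℝ) - β) ^ 2)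
        ((1 - β) / (2 * (n : ℝ) - 1 - β)) := by
  have hβ : 0 < 1 - β := by linarith
  have hn' : (2 : ℝ) ≤ n := by exact_mod_cast hn
  have hweights : ((n : ℝ) - β) / (1 - β) * ‖a n‖
      + (2 * (n : ℝ) - 1 - β) / (1 - β) * ‖a (2 * n - 1)‖ ≤ 1 := by
    have hpair := (hsum.add_le_tsum_of_ne
      (fun k ↦ mul_nonneg (div_nonneg (by linarith [k.cast_nonneg (α := ℝ)]) hβ.le) (norm_nonneg _))
      (show n - 2 ≠ 2 * n - 3 by omega)).trans h
    have e₁ : ((n - 2 : ℕ) : ℝ) + 2 - β = n - β := by rw [Nat.cast_sub hn]; push_cast; ring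
    have e₂ : ((2 * n - 3 : ℕ) : ℝ) + 2 - β = 2 * n - 1 - β := by
      rw [Nat.cast_sub (by omega : 3 ≤ 2 * n)]; push_cast; ring
    rwa [show n - 2 + 2 = n by omega, show 2 * n - 3 + 2 = 2 * n - 1 by omega, e₁, e₂] at hpair
  calc ‖lam * (a n) ^ 2 - a (2 * n - 1)‖ ≤ lam * ‖a n‖ ^ 2 + ‖a (2 * n - 1)‖ := by
        have hlam_norm : ‖(lam : ℂ) * a n ^ 2‖ = lam * ‖a n‖ ^ 2 := by
          rw [norm_mul, norm_pow, Complex.norm_real, Real.norm_of_nonneg hlam.le]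
        exact hlam_norm ▸ norm_sub_le _ _
    _ ≤ max (lam / (((n : ℝ) - β) / (1 - β)) ^ 2) (1 / ((2 * (n : ℝ) - 1 - β) / (1 - β))) :=
        mul_sq_add_le_max_of_weighted hlam.le (norm_nonneg _) (norm_nonneg _)
          (by apply div_pos <;> linarith) (by apply div_pos <;> linarith) hweights
    _ = _ := by rw [div_pow, div_div_eq_mul_div, one_div_div]

theorem stmt_14 (β : ℝ) (hβ0 : 0 ≤ β) (hβ1 : β < 1) (a : ℕ → ℂ)
    (hsum : Summable (fun n : ℕ =>
      (((n : ℝ) + 2 - β) / (1 - β)) * ‖a (n + 2)‖))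
    (h : ∑' n : ℕ, (((n : ℝ) + 2 - β) / (1 - β)) * ‖a (n + 2)‖ ≤ 1)
    (lam : ℝ) (hlam : 0 < lam) (n : ℕ) (hn : 2 ≤ n) :
    ‖lam * (a n) ^ 2 - a (2 * n - 1)‖ ≤
      max (lam * (1 - β) ^ 2 / ((n : ℝ) - β) ^ 2)
        ((1 - β) / (2 * (n : ℝ) - 1 - β)) :=
  stmt_14_general β hβ1 a hsum h lam hlam n hn
end

section
/- Let λ > 0, n ≥ 2, r₁ = r(n) > 0, r₂ = r(2n−1) > 0, and suppose a, b ∈ ℂ satisfy r₁|a| + r₂|b| ≤ 1 and |λa² − b| = max{λ/r₁², 1/r₂}, with λ < r₁²/r₂. Then a = 0 and |b| = 1/r₂. -/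
/-!
On the triangle `r₁ u + r₂ v ≤ 1` (with `u, v ≥ 0`) one has the identity
`r₂ (λ u² + v) = (r₁ u + r₂ v) - u (r₁ - λ r₂ u)`, and `λ r₂ < r₁²` together with `r₁ u ≤ 1`
makes the slope `r₁ - λ r₂ u` positive. Hence `λ u² + v ≤ 1 / r₂`, with equality only at
`u = 0, v = 1 / r₂`. Applied to `u = ‖a‖, v = ‖b‖` via `‖λ a² - b‖ ≤ λ ‖a‖² + ‖b‖`, this forces `a = 0`.
-/

lemma max_div_sq_one_div_eq_right {lam r1 r2 : ℝ} (hr2 : 0 < r2) (h : lam < r1 ^ 2 / r2) :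
    max (lam / r1 ^ 2) (1 / r2) = 1 / r2 := by
  refine max_eq_right ?_
  rcases (sq_nonneg r1).eq_or_lt with hr1 | hr1
  · rw [← hr1, div_zero]
    positivity
  · rw [div_le_div_iff₀ hr1 hr2]
    nlinarith [(lt_div_iff₀ hr2).mp h]

lemma eq_zero_and_eq_one_div_of_one_div_le_of_mem_triangle {lam r1 r2 u v : ℝ} (hlam : 0 ≤ lam)
    (hr1 : 0 < r1) (hr2 : 0 < r2) (hu : 0 ≤ u) (hv : 0 ≤ v) (htri : r1 * u + r2 * v ≤ 1)
    (hslope : lam * r2 < r1 ^ 2) (hle : 1 / r2 ≤ lam * u ^ 2 + v) :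
    u = 0 ∧ v = 1 / r2 := by
  have hu_le : r1 * u ≤ 1 := by nlinarith [mul_nonneg hr2.le hv]
  have hslope_pos : 0 < r1 - lam * r2 * u := by
    have : lam * r2 * (r1 * u) ≤ lam * r2 := mul_le_of_le_one_right (mul_nonneg hlam hr2.le) hu_le
    nlinarith
  have hr2le : 1 ≤ r2 * (lam * u ^ 2 + v) := by
    rwa [div_le_iff₀' hr2] at hle
  have hu0 : u = 0 := by
    have hident : r2 * (lam * u ^ 2 + v) = (r1 * u + r2 * v) - u * (r1 - lam * r2 * u) := by ring
    have hprod : u * (r1 - lam * r2 * u) ≤ 0 := by linarith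
    exact le_antisymm (nonpos_of_mul_nonpos_left hprod hslope_pos) hu
  subst hu0
  refine ⟨rfl, le_antisymm ?_ (by simpa using hle)⟩
  rw [le_div_iff₀' hr2]
  simpa using htri

lemma norm_ofReal_mul_sq_sub_le {lam : ℝ} (hlam : 0 ≤ lam) (a b : ℂ) :
    ‖(lam * a ^ 2 - b : ℂ)‖ ≤ lam * ‖a‖ ^ 2 + ‖b‖ :=
  calc ‖(lam * a ^ 2 - b : ℂ)‖ ≤ ‖(lam * a ^ 2 : ℂ)‖ + ‖b‖ := norm_sub_le _ _
    _ = lam * ‖a‖ ^ 2 + ‖b‖ := by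
      rw [norm_mul, norm_pow, Complex.norm_real, Real.norm_of_nonneg hlam]

theorem stmt_15_general (lam : ℝ) (hlam : 0 < lam)
    (r1 r2 : ℝ) (hr1 : 0 < r1) (hr2 : 0 < r2) (a b : ℂ)
    (h1 : r1 * ‖a‖ + r2 * ‖b‖ ≤ 1)
    (h2 : ‖(lam * a ^ 2 - b : ℂ)‖ = max (lam / r1 ^ 2) (1 / r2))
    (h3 : lam < r1 ^ 2 / r2) :
    a = 0 ∧ ‖b‖ = 1 / r2 := by
  have hle : 1 / r2 ≤ lam * ‖a‖ ^ 2 + ‖b‖ := by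
    rw [← max_div_sq_one_div_eq_right hr2 h3, ← h2]
    exact norm_ofReal_mul_sq_sub_le hlam.le a b
  obtain ⟨ha, hb⟩ := eq_zero_and_eq_one_div_of_one_div_le_of_mem_triangle hlam.le hr1 hr2
    (norm_nonneg a) (norm_nonneg b) h1 ((lt_div_iff₀ hr2).mp h3) hle
  exact ⟨norm_eq_zero.mp ha, hb⟩

theorem stmt_15 (lam : ℝ) (hlam : 0 < lam) (n : ℕ) (hn : 2 ≤ n)
    (r1 r2 : ℝ) (hr1 : 0 < r1) (hr2 : 0 < r2) (a b : ℂ)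
    (h1 : r1 * ‖a‖ + r2 * ‖b‖ ≤ 1)
    (h2 : ‖(lam * a ^ 2 - b : ℂ)‖ = max (lam / r1 ^ 2) (1 / r2))
    (h3 : lam < r1 ^ 2 / r2) :
    a = 0 ∧ ‖b‖ = 1 / r2 :=
  stmt_15_general lam hlam r1 r2 hr1 hr2 a b h1 h2 h3
end
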